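/- The map φ : ℝ⁴ → ℝ³ defined by φ(q1,q2,p1,p2) = (x,y,z) with x = p1/a + (b/a)p2·e^{(a/2)q1} − (c/a)e^{−(a/2)q1}, y = p2·e^{(a/2)q1}, z = e^{−(a/2)q1}, is a surjective submersion onto ℝ² × (0,∞) ⊆ ℝ³ (its image is { (x,y,z) : z > 0 }, it maps onto every point with z > 0, and its Fréchet derivative is surjective at every point of ℝ⁴). -/

import Mathlib

/-!
Up to the coordinate `q₂`, on which it does not depend, `φ` is inverted by the explicit map
`σₛ(x,y,z) = (-(2/a) log z, s, a x - b y + c z, y z)`, smooth on `{z > 0}`. So `φ ∘ σₛ = id` near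
every point with `z > 0`, and since every `q` equals `σ_{q₂}(φ q)`, the chain rule makes
`Dσ_{q₂}(φ q)` a right inverse of `Dφ(q)`.
-/

open Filter Topology

theorem surjective_fderiv_of_eventuallyEq_id {𝕜 E F : Type*} [NontriviallyNormedField 𝕜]
    [NormedAddCommGroup E] [NormedSpace 𝕜 E] [NormedAddCommGroup F] [NormedSpace 𝕜 F]
    {f : E → F} {g : F → E} {y : F} (hf : DifferentiableAt 𝕜 f (g y))
    (hg : DifferentiableAt 𝕜 g y) (hfg : f ∘ g =ᶠ[𝓝 y] id) :
    Function.Surjective (fderiv 𝕜 f (g y)) := by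
  have hcomp : fderiv 𝕜 f (g y) ∘L fderiv 𝕜 g y = ContinuousLinearMap.id 𝕜 F :=
    (hf.hasFDerivAt.comp y hg.hasFDerivAt).unique ((hasFDerivAt_id y).congr_of_eventuallyEq hfg)
  exact fun w => ⟨fderiv 𝕜 g y w, by simpa using congrArg (· w) hcomp⟩

section Phi

variable (a b c : ℝ)

noncomputable def phiMap (q : Fin 4 → ℝ) : Fin 3 → ℝ :=
  ![q 2 / a + b / a * q 3 * Real.exp (a / 2 * q 0) - c / a * Real.exp (-(a / 2) * q 0),
    q 3 * Real.exp (a / 2 * q 0),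
    Real.exp (-(a / 2) * q 0)]

noncomputable def phiSection (s : ℝ) (v : Fin 3 → ℝ) : Fin 4 → ℝ :=
  ![-(2 / a) * Real.log (v 2), s, a * v 0 - b * v 1 + c * v 2, v 1 * v 2]

theorem differentiable_phiMap : Differentiable ℝ (phiMap a b c) := by
  simp only [differentiable_pi, Fin.forall_fin_succ, phiMap]
  refine ⟨?_, ?_, ?_, fun i => i.elim0⟩ <;> simp <;> fun_prop

theorem differentiableAt_phiSection (s : ℝ) {v : Fin 3 → ℝ} (hv : 0 < v 2) :
    DifferentiableAt ℝ (phiSection a b c s) v := by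
  simp only [differentiableAt_pi, Fin.forall_fin_succ, phiSection]
  refine ⟨?_, ?_, ?_, ?_, fun i => i.elim0⟩ <;> simp <;> fun_prop (disch := positivity)

variable {a}

theorem phiMap_phiSection (ha : a ≠ 0) (s : ℝ) {v : Fin 3 → ℝ} (hv : 0 < v 2) :
    phiMap a b c (phiSection a b c s v) = v := by
  have hlog : a / 2 * (2 / a * Real.log (v 2)) = Real.log (v 2) := by field_simp
  ext i
  fin_cases i <;> simp [phiMap, phiSection, hlog, Real.exp_neg, Real.exp_log hv]
  · field_simp
    ring
  · field_simp

theorem phiSection_phiMap (ha : a ≠ 0) (q : Fin 4 → ℝ) :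
    phiSection a b c (q 1) (phiMap a b c q) = q := by
  ext i
  fin_cases i <;> simp [phiMap, phiSection, Real.exp_neg]
  · field_simp
  · field_simp
    ring

end Phi

theorem phi_surjective_submersion (a b c : ℝ) (ha : a ≠ 0)
    (φ : (Fin 4 → ℝ) → (Fin 3 → ℝ))
    (hφ : ∀ q, φ q = ![q 2 / a + b / a * q 3 * Real.exp (a / 2 * q 0)
                        - c / a * Real.exp (-(a / 2) * q 0),
                       q 3 * Real.exp (a / 2 * q 0),
                       Real.exp (-(a / 2) * q 0)]) :
    (∀ q, φ q 2 > 0)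
    ∧ (∀ v : Fin 3 → ℝ, v 2 > 0 → ∃ q, φ q = v)
    ∧ (∀ q, Function.Surjective (fderiv ℝ φ q)) := by
  obtain rfl : φ = phiMap a b c := funext hφ
  refine ⟨fun q => Real.exp_pos _, fun v hv => ⟨_, phiMap_phiSection b c ha 0 hv⟩, fun q => ?_⟩
  have hq : 0 < phiMap a b c q 2 := Real.exp_pos _
  have hnear : phiMap a b c ∘ phiSection a b c (q 1) =ᶠ[𝓝 (phiMap a b c q)] id :=
    ((isOpen_lt continuous_const (continuous_apply 2)).eventually_mem hq).mono
      fun v hv => phiMap_phiSection b c ha (q 1) hv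
  simpa only [phiSection_phiMap b c ha q] using
    surjective_fderiv_of_eventuallyEq_id (differentiable_phiMap a b c _)
      (differentiableAt_phiSection a b c (q 1) hq) hnear
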